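/- arXiv:0902.1878 — 2 statements merged into one kernel-verified Lean document; each statement's English description precedes it below -/
import Mathlib

section
/- Let γ > 0, u ∈ L¹(ℝ) non-negative, and suppose v : ℝ → ℝ is C², non-negative, with v, v', v'' integrable, satisfying v'' - γ v + u = 0 and v'(x) → 0 as x → ±∞. Then ‖v'‖_{L∞(ℝ)} ≤ 2‖u‖_{L¹(ℝ)}. -/
/-!
Integrating the ODE from `-∞` gives `v' x = γ ∫_{(-∞, x]} v - ∫_{(-∞, x]} u`, and integrating
it over all of `ℝ` (using `v' → 0` at both ends) gives `γ ∫ v = ∫ u`. Since `u, v ≥ 0`, both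
terms of `v' x` lie in `[0, ∫ u]`, so their difference has absolute value at most `∫ u`.
-/

open MeasureTheory Set Filter

section SecondOrderODE

variable {γ : ℝ} {u v : ℝ → ℝ}

lemma hasDerivAt_deriv_of_contDiff_two (hv : ContDiff ℝ 2 v) (x : ℝ) :
    HasDerivAt (deriv v) (deriv (deriv v) x) x :=
  ((contDiff_succ_iff_deriv (n := 1)).mp hv).2.2.differentiable one_ne_zero x |>.hasDerivAt

variable (hODE : ∀ x, deriv (deriv v) x = γ * v x - u x)
include hODE

lemma integrable_deriv_deriv_of_ode (hu : Integrable u) (hv : Integrable v) :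
    Integrable (deriv (deriv v)) :=
  ((hv.const_mul γ).sub hu).congr (ae_of_all _ fun x => (hODE x).symm)

lemma deriv_eq_setIntegral_Iic_of_ode (hv_C2 : ContDiff ℝ 2 v) (hu : Integrable u)
    (hv : Integrable v) (hv'_bot : Tendsto (deriv v) atBot (nhds 0)) (x : ℝ) :
    deriv v x = γ * (∫ y in Iic x, v y) - ∫ y in Iic x, u y := by
  have h := integral_Iic_of_hasDerivAt_of_tendsto' (a := x)
    (fun y _ => hasDerivAt_deriv_of_contDiff_two hv_C2 y)
    (integrable_deriv_deriv_of_ode hODE hu hv).integrableOn hv'_bot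
  rw [sub_zero] at h
  rw [← h, integral_congr_ae (ae_of_all _ hODE),
    integral_sub (hv.integrableOn.const_mul γ) hu.integrableOn, integral_const_mul]

lemma mul_integral_eq_integral_of_ode (hv_C2 : ContDiff ℝ 2 v) (hu : Integrable u)
    (hv : Integrable v) (hv'_top : Tendsto (deriv v) atTop (nhds 0))
    (hv'_bot : Tendsto (deriv v) atBot (nhds 0)) :
    γ * ∫ x, v x = ∫ x, u x := by
  have h := integral_of_hasDerivAt_of_tendsto (hasDerivAt_deriv_of_contDiff_two hv_C2)
    (integrable_deriv_deriv_of_ode hODE hu hv) hv'_bot hv'_top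
  rwa [sub_zero, integral_congr_ae (ae_of_all _ hODE), integral_sub (hv.const_mul γ) hu,
    integral_const_mul, sub_eq_zero] at h

lemma abs_deriv_le_integral_of_ode (hγ : 0 ≤ γ) (hv_C2 : ContDiff ℝ 2 v)
    (hu : Integrable u) (hu_nonneg : ∀ y, 0 ≤ u y) (hv : Integrable v) (hv_nonneg : ∀ y, 0 ≤ v y)
    (hv'_top : Tendsto (deriv v) atTop (nhds 0)) (hv'_bot : Tendsto (deriv v) atBot (nhds 0))
    (x : ℝ) : |deriv v x| ≤ ∫ y, u y := by
  rw [deriv_eq_setIntegral_Iic_of_ode hODE hv_C2 hu hv hv'_bot x]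
  refine abs_sub_le_of_nonneg_of_le (mul_nonneg hγ (integral_nonneg fun y => hv_nonneg y)) ?_
    (integral_nonneg fun y => hu_nonneg y) (setIntegral_le_integral hu (ae_of_all _ hu_nonneg))
  rw [← mul_integral_eq_integral_of_ode hODE hv_C2 hu hv hv'_top hv'_bot]
  exact mul_le_mul_of_nonneg_left (setIntegral_le_integral hv (ae_of_all _ hv_nonneg)) hγ

end SecondOrderODE

theorem stmt_6_general (γ : ℝ) (hγ : 0 < γ) (u v : ℝ → ℝ)
    (hu_int : MeasureTheory.Integrable u)
    (hu_nonneg : ∀ y, 0 ≤ u y)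
    (hv_C2 : ContDiff ℝ 2 v)
    (hv_nonneg : ∀ x, 0 ≤ v x)
    (hv_int : MeasureTheory.Integrable v)
    (hODE : ∀ x, deriv (deriv v) x = γ * v x - u x)
    (hv'_top : Filter.Tendsto (deriv v) Filter.atTop (nhds 0))
    (hv'_bot : Filter.Tendsto (deriv v) Filter.atBot (nhds 0)) :
    ∀ x, |deriv v x| ≤ 2 * ∫ y : ℝ, |u y| := by
  intro x
  have hu_abs : ∫ y, |u y| = ∫ y, u y :=
    integral_congr_ae (ae_of_all _ fun y => abs_of_nonneg (hu_nonneg y))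
  calc |deriv v x|
      ≤ ∫ y, u y := abs_deriv_le_integral_of_ode hODE hγ.le hv_C2 hu_int hu_nonneg hv_int
        hv_nonneg hv'_top hv'_bot x
    _ ≤ 2 * ∫ y, |u y| := by
      have hu_total : 0 ≤ ∫ y, u y := integral_nonneg fun y => hu_nonneg y
      rw [hu_abs]
      linarith

theorem stmt_6 (γ : ℝ) (hγ : 0 < γ) (u v : ℝ → ℝ)
    (hu_int : MeasureTheory.Integrable u)
    (hu_nonneg : ∀ y, 0 ≤ u y)
    (hv_C2 : ContDiff ℝ 2 v)
    (hv_nonneg : ∀ x, 0 ≤ v x)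
    (hv_int : MeasureTheory.Integrable v)
    (hv'_int : MeasureTheory.Integrable (deriv v))
    (hv''_int : MeasureTheory.Integrable (deriv (deriv v)))
    (hODE : ∀ x, deriv (deriv v) x = γ * v x - u x)
    (hv'_top : Filter.Tendsto (deriv v) Filter.atTop (nhds 0))
    (hv'_bot : Filter.Tendsto (deriv v) Filter.atBot (nhds 0)) :
    ∀ x, |deriv v x| ≤ 2 * ∫ y : ℝ, |u y| :=
  stmt_6_general γ hγ u v hu_int hu_nonneg hv_C2 hv_nonneg hv_int hODE hv'_top hv'_bot
end

section
/- Suppose u : ℝ → ℝ is non-negative and continuous, m > 1, δ > 0, μ = min(1, 1/(m-1)), and there exist constants C, C' > 0 such that |u(x) - u(y)| ≤ C'|x-y|^μ and |u(x)^(m-1+δ) - u(y)^(m-1+δ)| ≤ C · (sup_{z ∈ [x,y]} u(z))^δ · |x - y| for all x, y. If u(x₁) = 0, then u^(m-1+δ) is differentiable at x₁ with derivative 0. -/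
/-!
Between `x` and the zero `x₁`, the Hölder estimate bounds `u` by `C' |x - x₁|^μ`, so the gradient
estimate gives `|u x ^ (m - 1 + δ)| ≤ C C'^δ |x - x₁|^(1 + μδ)`. Since `μδ > 0`, this is
`o(x - x₁)`, which is differentiability at `x₁` with derivative `0`.
-/

open Filter Topology Asymptotics Set

theorem isLittleO_abs_sub_rpow_one_add {x₀ ε : ℝ} (hε : 0 < ε) :
    (fun x => |x - x₀| ^ (1 + ε)) =o[𝓝 x₀] fun x => x - x₀ := by
  have hsmall : (fun x => |x - x₀| ^ ε) =o[𝓝 x₀] fun _ => (1 : ℝ) := by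
    rw [isLittleO_one_iff]
    have := ((Real.continuous_rpow_const hε.le).comp (continuous_abs.comp
      (continuous_sub_right x₀))).tendsto x₀
    simpa [Function.comp_def, Real.zero_rpow hε.ne'] using this
  rw [← isLittleO_abs_right]
  refine (hsmall.mul_isBigO (isBigO_refl (fun x => |x - x₀|) _)).congr' ?_ (by simp)
  filter_upwards with x
  rw [Real.rpow_one_add' (abs_nonneg _) (by positivity), mul_comm]

theorem hasDerivAt_zero_of_abs_sub_le_rpow {f : ℝ → ℝ} {x₀ K ε : ℝ} (hε : 0 < ε)
    (hf : ∀ x, |f x - f x₀| ≤ K * |x - x₀| ^ (1 + ε)) : HasDerivAt f 0 x₀ := by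
  rw [hasDerivAt_iff_isLittleO]
  simp only [smul_zero, sub_zero]
  refine IsBigO.trans_isLittleO ?_ (isLittleO_abs_sub_rpow_one_add hε)
  exact IsBigO.of_bound K (Eventually.of_forall fun x => by
    simpa [Real.norm_eq_abs, abs_of_nonneg (Real.rpow_nonneg (abs_nonneg _) _)] using hf x)

theorem sSup_image_uIcc_le_of_holder {u : ℝ → ℝ} {C' α x₁ : ℝ} (hC' : 0 ≤ C') (hα : 0 ≤ α)
    (hHolder : ∀ x y, |u x - u y| ≤ C' * |x - y| ^ α) (hzero : u x₁ = 0) (x : ℝ) :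
    sSup (u '' uIcc x x₁) ≤ C' * |x - x₁| ^ α := by
  refine Real.sSup_le ?_ (by positivity)
  rintro _ ⟨z, hz, rfl⟩
  calc u z ≤ |u z - u x₁| := by rw [hzero, sub_zero]; exact le_abs_self _
    _ ≤ C' * |z - x₁| ^ α := hHolder z x₁
    _ ≤ C' * |x - x₁| ^ α := by
        rw [uIcc_comm] at hz
        gcongr ?_ * ?_ ^ _
        exact abs_sub_left_of_mem_uIcc hz

theorem stmt_14_general (u : ℝ → ℝ) (m δ C C' x₁ : ℝ)
    (hu_nonneg : ∀ x, 0 ≤ u x)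
    (hm : 1 < m) (hδ : 0 < δ) (hC : 0 < C) (hC' : 0 < C')
    (hHolder : ∀ x y : ℝ,
      |u x - u y| ≤ C' * |x - y| ^ (min 1 (1 / (m - 1))))
    (hGrad : ∀ x y : ℝ, x ≤ y →
      |u x ^ (m - 1 + δ) - u y ^ (m - 1 + δ)|
        ≤ C * (sSup (u '' Set.Icc x y)) ^ δ * |x - y|)
    (hzero : u x₁ = 0) :
    HasDerivAt (fun x => u x ^ (m - 1 + δ)) 0 x₁ := by
  set μ := min 1 (1 / (m - 1))
  have hμ : 0 < μ := lt_min one_pos (one_div_pos.mpr (sub_pos.mpr hm))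
  refine hasDerivAt_zero_of_abs_sub_le_rpow (K := C * C' ^ δ) (ε := μ * δ) (by positivity)
    fun x => ?_
  have hGrad_uIcc : |u x ^ (m - 1 + δ) - u x₁ ^ (m - 1 + δ)|
      ≤ C * sSup (u '' uIcc x x₁) ^ δ * |x - x₁| := by
    rcases le_total x x₁ with h | h
    · simpa only [uIcc_of_le h] using hGrad x x₁ h
    · simpa only [uIcc_of_ge h, abs_sub_comm] using hGrad x₁ x h
  have hsup_nonneg : 0 ≤ sSup (u '' uIcc x x₁) :=
    Real.sSup_nonneg (by rintro _ ⟨z, -, rfl⟩; exact hu_nonneg z)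
  calc |u x ^ (m - 1 + δ) - u x₁ ^ (m - 1 + δ)|
      ≤ C * sSup (u '' uIcc x x₁) ^ δ * |x - x₁| := hGrad_uIcc
    _ ≤ C * (C' * |x - x₁| ^ μ) ^ δ * |x - x₁| := by
        gcongr; exact sSup_image_uIcc_le_of_holder hC'.le hμ.le hHolder hzero x
    _ = C * C' ^ δ * |x - x₁| ^ (1 + μ * δ) := by
        rw [Real.mul_rpow hC'.le (by positivity), ← Real.rpow_mul (abs_nonneg _),
          Real.rpow_one_add' (abs_nonneg _) (by positivity)]
        ring

theorem stmt_14 (u : ℝ → ℝ) (m δ C C' x₁ : ℝ)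
    (hu_cont : Continuous u) (hu_nonneg : ∀ x, 0 ≤ u x)
    (hm : 1 < m) (hδ : 0 < δ) (hC : 0 < C) (hC' : 0 < C')
    (hHolder : ∀ x y : ℝ,
      |u x - u y| ≤ C' * |x - y| ^ (min 1 (1 / (m - 1))))
    (hGrad : ∀ x y : ℝ, x ≤ y →
      |u x ^ (m - 1 + δ) - u y ^ (m - 1 + δ)|
        ≤ C * (sSup (u '' Set.Icc x y)) ^ δ * |x - y|)
    (hzero : u x₁ = 0) :
    HasDerivAt (fun x => u x ^ (m - 1 + δ)) 0 x₁ :=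
  stmt_14_general u m δ C C' x₁ hu_nonneg hm hδ hC hC' hHolder hGrad hzero
end
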